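/- Every Preference-based Argumentation Framework (PAF) is an instance of ABA⁺: for the ABA⁺ framework corresponding to a PAF (Args, ⇝, ≼), the defeat relation of the repaired framework corresponds exactly to the <-attack relation on singletons, i.e. A defeats B in the PAF iff {A} <-attacks {B} in the corresponding ABA⁺ framework; consequently, E ⊆ Args is a σ extension of the PAF iff E is a <-σ extension of the corresponding ABA⁺ framework, for σ among grounded, ideal, stable, preferred, complete semantics. -/

import Mathlib

/-
In the ABA⁺ framework of a PAF every deduction is a single step `b̄ ← a` from an attack
`a ⇝ b`, so the framework is flat and a <-attack of `X` by `Y` (both sets of arguments) is either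
a normal attack `a ⇝ b` with `a ⊀ b`, or a reverse attack on `a ∈ Y` by `X` containing some
`c ⇝ a` together with some `d ≺ a`. Against a singleton `{b}` (so `c = d = b`) this is exactly
defeat; between arbitrary sets it yields a defeat in one direction or the other (`c` defeats `a`
unless `c ≺ a`, in which case `a` defeats `c`), and that suffices for conflict-freeness and
self-defence. All semantics then transfer along the injection `Sum.inl`; the grounded one also
needs a complete extension to exist, which a maximal admissible set provides.
-/

universe u

/-- An ABA framework: a deductive system `(ℒ, R)`, a nonempty set of assumptions,
and a total contrary map on assumptions (modelled as a total map on `ℒ`). -/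
structure ABAF (L : Type u) where
  rules : Set (L × List L)
  asms : Set L
  asms_nonempty : asms.Nonempty
  contrary : L → L

namespace ABAF

variable {L : Type u}

/-- There is a deduction for `φ` supported by `S` (and rules of `F`):
a finite tree with root `φ`, leaves labelled by `⊤` or elements of `S`,
children of non-leaf nodes given by bodies of rules with matching heads. -/
inductive Ded (F : ABAF L) (S : Set L) : L → Prop
  | assumption {φ : L} : φ ∈ S → Ded F S φ
  | rule {φ : L} {body : List L} : (φ, body) ∈ F.rules →
      (∀ ψ ∈ body, Ded F S ψ) → Ded F S φ

/-- The conclusions of `E`: all sentences deducible from subsets of `E`. -/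
def cn (F : ABAF L) (E : Set L) : Set L := {φ | F.Ded E φ}

/-- The closure of `E`: all assumptions deducible from `E`. -/
def cl (F : ABAF L) (E : Set L) : Set L := F.cn E ∩ F.asms

/-- `E` is closed iff it coincides with its closure. -/
def Closed (F : ABAF L) (E : Set L) : Prop := F.cl E = E

/-- `A` attacks `B` iff some `A' ⊆ A` supports a deduction of the contrary of some `β ∈ B`. -/
def Attacks (F : ABAF L) (A B : Set L) : Prop :=
  ∃ A' ⊆ A, ∃ β ∈ B, F.Ded A' (F.contrary β)

/-- A framework is flat iff every set of assumptions is closed. -/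
def Flat (F : ABAF L) : Prop := ∀ E ⊆ F.asms, F.Closed E

def ConflictFree (F : ABAF L) (E : Set L) : Prop := ¬ F.Attacks E E

def Defends (F : ABAF L) (E A : Set L) : Prop :=
  ∀ B ⊆ F.asms, F.Closed B → F.Attacks B A → F.Attacks E B

def Admissible (F : ABAF L) (E : Set L) : Prop :=
  E ⊆ F.asms ∧ F.Closed E ∧ F.ConflictFree E ∧ F.Defends E E

def Preferred (F : ABAF L) (E : Set L) : Prop :=
  F.Admissible E ∧ ∀ E', F.Admissible E' → E ⊆ E' → E' = E

def Complete (F : ABAF L) (E : Set L) : Prop :=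
  F.Admissible E ∧ ∀ A ⊆ F.asms, F.Defends E A → A ⊆ E

def Stable (F : ABAF L) (E : Set L) : Prop :=
  E ⊆ F.asms ∧ F.Closed E ∧ F.ConflictFree E ∧
    ∀ β ∈ F.asms, β ∉ E → F.Attacks E {β}

def WellFounded (F : ABAF L) (E : Set L) : Prop :=
  E = ⋂₀ {E' | F.Complete E'}

def Ideal (F : ABAF L) (E : Set L) : Prop :=
  (F.Admissible E ∧ ∀ P, F.Preferred P → E ⊆ P) ∧
    ∀ E', (F.Admissible E' ∧ ∀ P, F.Preferred P → E' ⊆ P) → E ⊆ E' → E' = E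

end ABAF

/-- An ABA⁺ framework: an ABA framework with a transitive preference relation on assumptions. -/
structure ABAPlus (L : Type u) extends ABAF L where
  le : L → L → Prop
  le_trans : ∀ a b c, le a b → le b c → le a c

namespace ABAPlus

variable {L : Type u}

/-- The strict counterpart of the preference relation. -/
def lt (F : ABAPlus L) (a b : L) : Prop := F.le a b ∧ ¬ F.le b a

/-- `A` <-attacks `B`: either a normal attack (a deduction from `A' ⊆ A` of the contrary of
some `β ∈ B` with no supporting assumption strictly less preferred than `β`),
or a reverse attack (a deduction from `B' ⊆ B` of the contrary of some `α ∈ A` using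
some assumption strictly less preferred than `α`). -/
def LtAttacks (F : ABAPlus L) (A B : Set L) : Prop :=
  (∃ A' ⊆ A, ∃ β ∈ B, F.toABAF.Ded A' (F.contrary β) ∧ ∀ α' ∈ A', ¬ F.lt α' β) ∨
  (∃ B' ⊆ B, ∃ α ∈ A, F.toABAF.Ded B' (F.contrary α) ∧ ∃ β' ∈ B', F.lt β' α)

def LtConflictFree (F : ABAPlus L) (E : Set L) : Prop := ¬ F.LtAttacks E E

def LtDefends (F : ABAPlus L) (E A : Set L) : Prop :=
  ∀ B ⊆ F.asms, F.toABAF.Closed B → F.LtAttacks B A → F.LtAttacks E B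

def LtAdmissible (F : ABAPlus L) (E : Set L) : Prop :=
  E ⊆ F.asms ∧ F.toABAF.Closed E ∧ F.LtConflictFree E ∧ F.LtDefends E E

def LtPreferred (F : ABAPlus L) (E : Set L) : Prop :=
  F.LtAdmissible E ∧ ∀ E', F.LtAdmissible E' → E ⊆ E' → E' = E

def LtComplete (F : ABAPlus L) (E : Set L) : Prop :=
  F.LtAdmissible E ∧ ∀ A ⊆ F.asms, F.LtDefends E A → A ⊆ E

def LtStable (F : ABAPlus L) (E : Set L) : Prop :=
  E ⊆ F.asms ∧ F.toABAF.Closed E ∧ F.LtConflictFree E ∧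
    ∀ β ∈ F.asms, β ∉ E → F.LtAttacks E {β}

def LtWellFounded (F : ABAPlus L) (E : Set L) : Prop :=
  E = ⋂₀ {E' | F.LtComplete E'}

def LtIdeal (F : ABAPlus L) (E : Set L) : Prop :=
  (F.LtAdmissible E ∧ ∀ P, F.LtPreferred P → E ⊆ P) ∧
    ∀ E', (F.LtAdmissible E' ∧ ∀ P, F.LtPreferred P → E' ⊆ P) → E ⊆ E' → E' = E

/-- The Axiom of Weak Contraposition. -/
def WCP (F : ABAPlus L) : Prop :=
  ∀ A ⊆ F.asms, ∀ β ∈ F.asms,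
    F.toABAF.Ded A (F.contrary β) → (∃ α' ∈ A, F.lt α' β) →
    ∃ α ∈ A, F.lt α β ∧ (∀ α'' ∈ A, F.lt α'' β → ¬ F.lt α'' α) ∧
      ∃ Aα ⊆ (A \ {α}) ∪ {β}, F.toABAF.Ded Aα (F.contrary α)

end ABAPlus

/-- A Preference-based Argumentation Framework: an abstract argumentation framework
with a preorder over arguments. -/
structure PAF (Arg : Type u) where
  att : Arg → Arg → Prop
  pre : Arg → Arg → Prop
  pre_refl : ∀ a, pre a a
  pre_trans : ∀ a b c, pre a b → pre b c → pre a c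

namespace PAF

variable {Arg : Type u}

def plt (P : PAF Arg) (a b : Arg) : Prop := P.pre a b ∧ ¬ P.pre b a

/-- Defeat in the repaired framework: attacks from non-less-preferred arguments,
and reversed attacks from strictly less preferred arguments. -/
def Defeat (P : PAF Arg) (a b : Arg) : Prop :=
  (P.att a b ∧ ¬ P.plt a b) ∨ (P.att b a ∧ P.plt b a)

def CF (P : PAF Arg) (E : Set Arg) : Prop := ¬ ∃ a ∈ E, ∃ b ∈ E, P.Defeat a b

def DefendsArg (P : PAF Arg) (E : Set Arg) (a : Arg) : Prop :=
  ∀ b, P.Defeat b a → ∃ c ∈ E, P.Defeat c b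

def Admissible (P : PAF Arg) (E : Set Arg) : Prop :=
  P.CF E ∧ ∀ a ∈ E, P.DefendsArg E a

def Preferred (P : PAF Arg) (E : Set Arg) : Prop :=
  P.Admissible E ∧ ∀ E', P.Admissible E' → E ⊆ E' → E' = E

def Complete (P : PAF Arg) (E : Set Arg) : Prop :=
  P.Admissible E ∧ ∀ a, P.DefendsArg E a → a ∈ E

def Stable (P : PAF Arg) (E : Set Arg) : Prop :=
  P.CF E ∧ ∀ b, b ∉ E → ∃ a ∈ E, P.Defeat a b

def Grounded (P : PAF Arg) (E : Set Arg) : Prop :=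
  E = ⋂₀ {E' | P.Complete E'}

def Ideal (P : PAF Arg) (E : Set Arg) : Prop :=
  (P.Admissible E ∧ ∀ Q, P.Preferred Q → E ⊆ Q) ∧
    ∀ E', (P.Admissible E' ∧ ∀ Q, P.Preferred Q → E' ⊆ Q) → E ⊆ E' → E' = E

/-- The ABA⁺ framework corresponding to a PAF: arguments become assumptions (`Sum.inl`),
with fresh contraries (`Sum.inr`), each attack `A ⇝ B` becomes a rule `B̄ ← A`, and the
preference ordering is transferred as is. -/
def toABAPlus [Nonempty Arg] (P : PAF Arg) : ABAPlus (Arg ⊕ Arg) where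
  rules := {r | ∃ a b, P.att a b ∧ r = (Sum.inr b, [Sum.inl a])}
  asms := Set.range Sum.inl
  asms_nonempty := ⟨Sum.inl (Classical.arbitrary Arg), Set.mem_range_self _⟩
  contrary := fun x => Sum.elim Sum.inr Sum.inl x
  le := fun x y => ∃ a b, x = Sum.inl a ∧ y = Sum.inl b ∧ P.pre a b
  le_trans := by
    rintro x y z ⟨a, b, rfl, rfl, h1⟩ ⟨b', c, hb, rfl, h2⟩
    injection hb with hb
    subst hb
    exact ⟨a, c, rfl, rfl, P.pre_trans _ _ _ h1 h2⟩

end PAF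

namespace ABAPlus

variable {L : Type u} {F : ABAPlus L}

theorem LtAttacks.mono {A A' B B' : Set L} (hA : A ⊆ A') (hB : B ⊆ B')
    (h : F.LtAttacks A B) : F.LtAttacks A' B' := by
  rcases h with ⟨S, hS, β, hβ, hd⟩ | ⟨S, hS, α, hα, hd⟩
  · exact Or.inl ⟨S, hS.trans hA, β, hB hβ, hd⟩
  · exact Or.inr ⟨S, hS.trans hB, α, hA hα, hd⟩

theorem LtDefends.anti {E A A' : Set L} (h : F.LtDefends E A) (hA : A' ⊆ A) :
    F.LtDefends E A' :=
  fun B hB hcl hatt => h B hB hcl (hatt.mono subset_rfl hA)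

end ABAPlus

namespace Function.Injective

variable {α β : Type*} {f : α → β} {p : Set α → Prop} {q : Set β → Prop}

theorem forall_setPred_iff (hpq : ∀ X, p X ↔ q (f '' X)) (hq : ∀ Y, q Y → Y ⊆ Set.range f)
    {R : Set β → Prop} : (∀ Y, q Y → R Y) ↔ ∀ X, p X → R (f '' X) := by
  refine ⟨fun h X hX => h _ ((hpq X).1 hX), fun h Y hY => ?_⟩
  have hY' : f '' (f ⁻¹' Y) = Y := Set.image_preimage_eq_of_subset (hq Y hY)
  rw [← hY'] at hY ⊢
  exact h _ ((hpq _).2 hY)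

theorem maximal_setPred_iff (hf : Injective f) (hpq : ∀ X, p X ↔ q (f '' X))
    (hq : ∀ Y, q Y → Y ⊆ Set.range f) (E : Set α) :
    (p E ∧ ∀ E', p E' → E ⊆ E' → E' = E) ↔
      (q (f '' E) ∧ ∀ Y, q Y → f '' E ⊆ Y → Y = f '' E) := by
  rw [forall_setPred_iff hpq hq, hpq]
  simp only [Set.image_subset_image_iff hf, Set.image_eq_image hf]

theorem subset_forall_setPred_iff (hf : Injective f) (hpq : ∀ X, p X ↔ q (f '' X))
    (hq : ∀ Y, q Y → Y ⊆ Set.range f) (E : Set α) :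
    (∀ X, p X → E ⊆ X) ↔ ∀ Y, q Y → f '' E ⊆ Y := by
  rw [forall_setPred_iff hpq hq]
  simp only [Set.image_subset_image_iff hf]

theorem eq_sInter_setPred_iff (hf : Injective f) (hpq : ∀ X, p X ↔ q (f '' X))
    (hq : ∀ Y, q Y → Y ⊆ Set.range f) (hp : ∃ X, p X) (E : Set α) :
    E = ⋂₀ {X | p X} ↔ f '' E = ⋂₀ {Y | q Y} := by
  suffices f '' ⋂₀ {X | p X} = ⋂₀ {Y | q Y} by rw [← this, Set.image_eq_image hf]
  ext y
  simp only [Set.mem_sInter, Set.mem_ofPred_eq, forall_setPred_iff hpq hq]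
  constructor
  · rintro ⟨a, ha, rfl⟩ X hX
    exact Set.mem_image_of_mem f (ha X hX)
  · intro hy
    obtain ⟨X₀, hX₀⟩ := hp
    obtain ⟨a, -, rfl⟩ := hy X₀ hX₀
    exact ⟨a, fun X hX => hf.mem_set_image.1 (hy X hX), rfl⟩

end Function.Injective

namespace PAF

variable {Arg : Type u}

theorem DefendsArg.mono {P : PAF Arg} {E E' : Set Arg} {a : Arg} (hd : P.DefendsArg E a)
    (h : E ⊆ E') : P.DefendsArg E' a := by
  intro b hb
  obtain ⟨c, hc, hdef⟩ := hd b hb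
  exact ⟨c, h hc, hdef⟩

theorem Admissible.insert_of_defendsArg {P : PAF Arg} {E : Set Arg} (hE : P.Admissible E)
    {a : Arg} (ha : P.DefendsArg E a) : P.Admissible (insert a E) := by
  have hdef : ∀ z ∈ insert a E, P.DefendsArg E z := by
    rintro z (rfl | hz)
    exacts [ha, hE.2 z hz]
  refine ⟨?_, fun z hz => (hdef z hz).mono (Set.subset_insert a E)⟩
  rintro ⟨x, hx, y, hy, hxy⟩
  obtain ⟨c, hc, hcx⟩ := hdef y hy x hxy
  obtain ⟨d, hd, hdc⟩ := hdef x hx c hcx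
  exact hE.1 ⟨d, hd, c, hc, hdc⟩

theorem exists_complete (P : PAF Arg) : ∃ E, P.Complete E := by
  have hchain : ∀ c ⊆ {E | P.Admissible E}, IsChain (· ⊆ ·) c → c.Nonempty →
      ∃ ub ∈ {E | P.Admissible E}, ∀ s ∈ c, s ⊆ ub := by
    refine fun c hc hchain _ => ⟨⋃₀ c, ⟨?_, ?_⟩, fun s hs => Set.subset_sUnion_of_mem hs⟩
    · rintro ⟨x, ⟨s, hs, hxs⟩, y, ⟨t, ht, hyt⟩, hxy⟩
      rcases hchain.total hs ht with h | h
      · exact (hc ht).1 ⟨x, h hxs, y, hyt, hxy⟩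
      · exact (hc hs).1 ⟨x, hxs, y, h hyt, hxy⟩
    · rintro z ⟨s, hs, hzs⟩
      exact ((hc hs).2 z hzs).mono (Set.subset_sUnion_of_mem hs)
  have hempty : P.Admissible ∅ :=
    ⟨fun ⟨_, hx, _⟩ => hx, fun _ hz => absurd hz (Set.notMem_empty _)⟩
  obtain ⟨M, -, hM⟩ := zorn_subset_nonempty {E | P.Admissible E} hchain ∅ hempty
  refine ⟨M, hM.prop, fun a ha => ?_⟩
  rw [← hM.eq_of_ge (hM.prop.insert_of_defendsArg ha) (Set.subset_insert a M)]
  exact Set.mem_insert a M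

section toABAPlus

variable [Nonempty Arg] (P : PAF Arg)

theorem toABAPlus_asms : P.toABAPlus.asms = Set.range Sum.inl := rfl

theorem contrary_inl (b : Arg) : P.toABAPlus.contrary (Sum.inl b) = Sum.inr b := rfl

theorem image_inl_subset_asms (X : Set Arg) : Sum.inl '' X ⊆ P.toABAPlus.asms :=
  Set.image_subset_range _ _

theorem lt_inl_iff {a b : Arg} :
    P.toABAPlus.lt (Sum.inl a) (Sum.inl b) ↔ P.plt a b := by
  have hle : ∀ x y : Arg, P.toABAPlus.le (Sum.inl x) (Sum.inl y) ↔ P.pre x y := by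
    refine fun x y => ⟨?_, fun h => ⟨x, y, rfl, rfl, h⟩⟩
    rintro ⟨x', y', hx, hy, h⟩
    rwa [Sum.inl_injective hx, Sum.inl_injective hy]
  rw [ABAPlus.lt, PAF.plt, hle, hle]

theorem ded_inl_iff {S : Set (Arg ⊕ Arg)} {a : Arg} :
    P.toABAPlus.Ded S (Sum.inl a) ↔ Sum.inl a ∈ S := by
  refine ⟨fun h => ?_, ABAF.Ded.assumption⟩
  cases h with
  | assumption h => exact h
  | rule hr _ =>
    obtain ⟨_, _, _, hr⟩ := hr
    exact absurd (Prod.mk.inj hr).1 Sum.inl_ne_inr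

theorem ded_contrary_iff {S : Set (Arg ⊕ Arg)} (hS : S ⊆ P.toABAPlus.asms) {b : Arg} :
    P.toABAPlus.Ded S (P.toABAPlus.contrary (Sum.inl b)) ↔
      ∃ a, P.att a b ∧ Sum.inl a ∈ S := by
  constructor
  · intro h
    cases h with
    | assumption h => exact absurd (hS h) (by simp [toABAPlus_asms, contrary_inl])
    | rule hr hbody =>
      obtain ⟨a, b', hab, hr⟩ := hr
      obtain ⟨hb, rfl⟩ := Prod.mk.inj hr
      cases Sum.inr_injective hb
      exact ⟨a, hab, (P.ded_inl_iff).1 (hbody _ (List.mem_singleton_self _))⟩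
  · rintro ⟨a, hab, ha⟩
    refine ABAF.Ded.rule ⟨a, b, hab, rfl⟩ fun ψ hψ => ?_
    rw [List.mem_singleton.1 hψ]
    exact ABAF.Ded.assumption ha

theorem toABAPlus_flat : P.toABAPlus.Flat := by
  refine fun E hE => Set.ext fun φ => ⟨fun ⟨hded, hφ⟩ => ?_, fun h => ⟨.assumption h, hE h⟩⟩
  obtain ⟨a, rfl⟩ := hφ
  exact (P.ded_inl_iff).1 hded

theorem ltAttacks_image_iff (Y X : Set Arg) :
    P.toABAPlus.LtAttacks (Sum.inl '' Y) (Sum.inl '' X) ↔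
      (∃ a ∈ Y, ∃ b ∈ X, P.att a b ∧ ¬ P.plt a b) ∨
      (∃ a ∈ Y, (∃ c ∈ X, P.att c a) ∧ ∃ d ∈ X, P.plt d a) := by
  have hmem : ∀ {Z : Set Arg} {S : Set (Arg ⊕ Arg)} {a}, S ⊆ Sum.inl '' Z → Sum.inl a ∈ S →
      a ∈ Z :=
    fun hS ha => Sum.inl_injective.mem_set_image.1 (hS ha)
  constructor
  · rintro (⟨A, hA, _, ⟨b, hb, rfl⟩, hded, hmin⟩ | ⟨B, hB, _, ⟨a, ha, rfl⟩, hded, β, hβ, hlt⟩)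
    · obtain ⟨a, hab, ha⟩ := (P.ded_contrary_iff (hA.trans (P.image_inl_subset_asms Y))).1 hded
      exact Or.inl ⟨a, hmem hA ha, b, hb, hab, fun h => hmin _ ha ((P.lt_inl_iff).2 h)⟩
    · obtain ⟨c, hca, hc⟩ := (P.ded_contrary_iff (hB.trans (P.image_inl_subset_asms X))).1 hded
      obtain ⟨d, hd, rfl⟩ := hB hβ
      exact Or.inr ⟨a, ha, ⟨c, hmem hB hc, hca⟩, d, hd, (P.lt_inl_iff).1 hlt⟩
  · rintro (⟨a, ha, b, hb, hab, hnlt⟩ | ⟨a, ha, ⟨c, hc, hca⟩, d, hd, hlt⟩)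
    · refine Or.inl ⟨{Sum.inl a}, by simpa using ha, Sum.inl b, ⟨b, hb, rfl⟩, ?_, ?_⟩
      · exact (P.ded_contrary_iff (by simp [toABAPlus_asms])).2 ⟨a, hab, rfl⟩
      · rintro _ rfl
        rwa [P.lt_inl_iff]
    · have hcd : ({c, d} : Set Arg) ⊆ X := Set.insert_subset hc (Set.singleton_subset_iff.2 hd)
      refine Or.inr ⟨Sum.inl '' {c, d}, Set.image_mono hcd, Sum.inl a, ⟨a, ha, rfl⟩, ?_,
        Sum.inl d, ⟨d, by simp, rfl⟩, (P.lt_inl_iff).2 hlt⟩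
      exact (P.ded_contrary_iff (P.image_inl_subset_asms _)).2 ⟨c, hca, c, by simp, rfl⟩

theorem ltAttacks_image_singleton_iff (Y : Set Arg) (b : Arg) :
    P.toABAPlus.LtAttacks (Sum.inl '' Y) {Sum.inl b} ↔ ∃ a ∈ Y, P.Defeat a b := by
  rw [← Set.image_singleton, P.ltAttacks_image_iff]
  simp only [Set.mem_singleton_iff, exists_eq_left, PAF.Defeat]
  constructor
  · rintro (⟨a, ha, h⟩ | ⟨a, ha, h⟩)
    exacts [⟨a, ha, Or.inl h⟩, ⟨a, ha, Or.inr h⟩]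
  · rintro ⟨a, ha, h | h⟩
    exacts [Or.inl ⟨a, ha, h⟩, Or.inr ⟨a, ha, h⟩]

theorem defeat_iff_ltAttacks (a b : Arg) :
    P.Defeat a b ↔ P.toABAPlus.LtAttacks {Sum.inl a} {Sum.inl b} := by
  rw [← Set.image_singleton, P.ltAttacks_image_singleton_iff]
  simp

theorem ltAttacks_image_of_defeat {Y X : Set Arg} {a b : Arg} (ha : a ∈ Y) (hb : b ∈ X)
    (h : P.Defeat a b) : P.toABAPlus.LtAttacks (Sum.inl '' Y) (Sum.inl '' X) :=
  ((P.ltAttacks_image_singleton_iff Y b).2 ⟨a, ha, h⟩).mono subset_rfl (by simpa using hb)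

theorem exists_defeat_of_ltAttacks_image {Y X : Set Arg}
    (h : P.toABAPlus.LtAttacks (Sum.inl '' Y) (Sum.inl '' X)) :
    (∃ a ∈ Y, ∃ b ∈ X, P.Defeat a b) ∨ ∃ b ∈ X, ∃ a ∈ Y, P.Defeat b a := by
  rcases (P.ltAttacks_image_iff Y X).1 h with
    ⟨a, ha, b, hb, hab⟩ | ⟨a, ha, ⟨c, hc, hca⟩, -⟩
  · exact Or.inl ⟨a, ha, b, hb, Or.inl hab⟩
  · by_cases hlt : P.plt c a
    · exact Or.inl ⟨a, ha, c, hc, Or.inr ⟨hca, hlt⟩⟩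
    · exact Or.inr ⟨c, hc, a, ha, Or.inl ⟨hca, hlt⟩⟩

theorem cf_iff_ltConflictFree (E : Set Arg) :
    P.CF E ↔ P.toABAPlus.LtConflictFree (Sum.inl '' E) := by
  rw [PAF.CF, ABAPlus.LtConflictFree, not_iff_not]
  refine ⟨fun ⟨a, ha, b, hb, h⟩ => P.ltAttacks_image_of_defeat ha hb h, fun h => ?_⟩
  rcases P.exists_defeat_of_ltAttacks_image h with h | ⟨b, hb, a, ha, h⟩
  exacts [h, ⟨b, hb, a, ha, h⟩]

theorem ltDefends_iff (E A : Set (Arg ⊕ Arg)) :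
    P.toABAPlus.LtDefends E A ↔
      ∀ Y : Set Arg, P.toABAPlus.LtAttacks (Sum.inl '' Y) A →
        P.toABAPlus.LtAttacks E (Sum.inl '' Y) := by
  refine ⟨fun h Y => h _ (P.image_inl_subset_asms Y)
    (P.toABAPlus_flat _ (P.image_inl_subset_asms Y)), fun h B hB _ => ?_⟩
  rw [← Set.image_preimage_eq_of_subset hB]
  exact h _

theorem defendsArg_iff_ltDefends (E : Set Arg) (a : Arg) :
    P.DefendsArg E a ↔ P.toABAPlus.LtDefends (Sum.inl '' E) {Sum.inl a} := by
  simp only [P.ltDefends_iff, P.ltAttacks_image_singleton_iff]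
  constructor
  · rintro h Y ⟨b, hb, hba⟩
    obtain ⟨c, hc, hcb⟩ := h b hba
    exact P.ltAttacks_image_of_defeat hc hb hcb
  · intro h b hba
    have hEb := h {b} ⟨b, rfl, hba⟩
    rwa [Set.image_singleton, P.ltAttacks_image_singleton_iff] at hEb

theorem defends_self_iff_ltDefends (E : Set Arg) :
    (∀ a ∈ E, P.DefendsArg E a) ↔ P.toABAPlus.LtDefends (Sum.inl '' E) (Sum.inl '' E) := by
  refine ⟨fun h => (P.ltDefends_iff _ _).2 fun Y hY => ?_, fun h a ha => ?_⟩
  · rcases P.exists_defeat_of_ltAttacks_image hY with ⟨b, hb, a, ha, hba⟩ | ⟨a, ha, b, hb, hab⟩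
    · obtain ⟨c, hc, hcb⟩ := h a ha b hba
      exact P.ltAttacks_image_of_defeat hc hb hcb
    · exact P.ltAttacks_image_of_defeat ha hb hab
  · exact (P.defendsArg_iff_ltDefends E a).2 (h.anti (by simpa using ha))

theorem admissible_iff_ltAdmissible (E : Set Arg) :
    P.Admissible E ↔ P.toABAPlus.LtAdmissible (Sum.inl '' E) := by
  have hE := P.image_inl_subset_asms E
  rw [PAF.Admissible, ABAPlus.LtAdmissible, cf_iff_ltConflictFree, defends_self_iff_ltDefends]
  exact ⟨fun h => ⟨hE, P.toABAPlus_flat _ hE, h⟩, fun h => h.2.2⟩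

theorem complete_iff_ltComplete (E : Set Arg) :
    P.Complete E ↔ P.toABAPlus.LtComplete (Sum.inl '' E) := by
  rw [PAF.Complete, ABAPlus.LtComplete, admissible_iff_ltAdmissible]
  refine and_congr_right fun _ => ⟨fun h A hA hdef x hx => ?_, fun h a ha => ?_⟩
  · obtain ⟨a, rfl⟩ := hA hx
    have hsingle := hdef.anti (Set.singleton_subset_iff.2 hx)
    exact ⟨a, h a ((P.defendsArg_iff_ltDefends E a).2 hsingle), rfl⟩
  · have hsub := h {Sum.inl a} (by simp [toABAPlus_asms])
      ((P.defendsArg_iff_ltDefends E a).1 ha) (Set.mem_singleton _)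
    exact Sum.inl_injective.mem_set_image.1 hsub

theorem stable_iff_ltStable (E : Set Arg) :
    P.Stable E ↔ P.toABAPlus.LtStable (Sum.inl '' E) := by
  have hE := P.image_inl_subset_asms E
  rw [PAF.Stable, ABAPlus.LtStable, cf_iff_ltConflictFree, toABAPlus_asms,
    Set.forall_mem_range]
  simp only [Sum.inl_injective.mem_set_image, ltAttacks_image_singleton_iff]
  exact ⟨fun h => ⟨hE, P.toABAPlus_flat _ hE, h⟩, fun h => h.2.2⟩

theorem preferred_iff_ltPreferred (E : Set Arg) :
    P.Preferred E ↔ P.toABAPlus.LtPreferred (Sum.inl '' E) :=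
  Sum.inl_injective.maximal_setPred_iff P.admissible_iff_ltAdmissible (fun _ hY => hY.1) E

theorem ideal_iff_ltIdeal (E : Set Arg) :
    P.Ideal E ↔ P.toABAPlus.LtIdeal (Sum.inl '' E) := by
  have hlower : ∀ X, (P.Admissible X ∧ ∀ Q, P.Preferred Q → X ⊆ Q) ↔
      (P.toABAPlus.LtAdmissible (Sum.inl '' X) ∧
        ∀ R, P.toABAPlus.LtPreferred R → Sum.inl '' X ⊆ R) := fun X =>
    and_congr (P.admissible_iff_ltAdmissible X) (Sum.inl_injective.subset_forall_setPred_iff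
      P.preferred_iff_ltPreferred (fun _ hY => hY.1.1) X)
  exact Sum.inl_injective.maximal_setPred_iff (q := fun Y => P.toABAPlus.LtAdmissible Y ∧
    ∀ R, P.toABAPlus.LtPreferred R → Y ⊆ R) hlower (fun _ hY => hY.1.1) E

theorem grounded_iff_ltWellFounded (E : Set Arg) :
    P.Grounded E ↔ P.toABAPlus.LtWellFounded (Sum.inl '' E) :=
  Sum.inl_injective.eq_sInter_setPred_iff P.complete_iff_ltComplete (fun _ hY => hY.1.1)
    P.exists_complete E

end toABAPlus

end PAF

/-- every PAF is an instance of ABA⁺: defeat in the repaired framework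
corresponds exactly to <-attack between singletons in the corresponding ABA⁺ framework,
and `E` is a σ extension of the PAF iff `Sum.inl '' E` is a <-σ extension of the
corresponding ABA⁺ framework, for σ among grounded, ideal, stable, preferred and
complete semantics. -/
theorem PAF.instance_of_ABAPlus {Arg : Type u} [Nonempty Arg] (P : PAF Arg) :
    (∀ a b : Arg,
      P.Defeat a b ↔ P.toABAPlus.LtAttacks {Sum.inl a} {Sum.inl b}) ∧
    (∀ E : Set Arg,
      (P.Grounded E ↔ P.toABAPlus.LtWellFounded (Sum.inl '' E)) ∧
      (P.Ideal E ↔ P.toABAPlus.LtIdeal (Sum.inl '' E)) ∧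
      (P.Stable E ↔ P.toABAPlus.LtStable (Sum.inl '' E)) ∧
      (P.Preferred E ↔ P.toABAPlus.LtPreferred (Sum.inl '' E)) ∧
      (P.Complete E ↔ P.toABAPlus.LtComplete (Sum.inl '' E))) :=
  ⟨P.defeat_iff_ltAttacks, fun E => ⟨P.grounded_iff_ltWellFounded E, P.ideal_iff_ltIdeal E,
    P.stable_iff_ltStable E, P.preferred_iff_ltPreferred E, P.complete_iff_ltComplete E⟩⟩
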